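/- arXiv:1808.01441 — 3 statements merged into one kernel-verified Lean document; each statement's English description precedes it below -/
import Mathlib

section
/- Let f ∈ ℤ[X] be a monic irreducible polynomial of degree d ≥ 2 with d distinct real roots α_1 < ⋯ < α_d, and let g ∈ ℤ[X] be a monic polynomial that interlaces f. For i = 1, …, d set λ_i = g(α_i)/f′(α_i). Then λ_i > 0 for every i, ∑_{i=1}^d λ_i = 1, and ∏_{i=1}^d λ_i = |Res(f, g)| / |Disc(f)|, where Res(f,g) denotes the resultant of f and g and Disc(f) the discriminant of f. -/
/-!
Since `f` has the simple roots `α i`, `f′(α i) = ∏_{j ≠ i} (α i - α j)`, so `∑ λ i` is Lagrange's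
formula for the coefficient of `X ^ n` of the monic polynomial `g` of degree `n`, which is `1`.
For positivity, interlacing puts each root `β k` of `g` on the same side of `α i` as the root
`α (i.succAbove k)` of `f`, so `λ i` is a product of positive quotients. The product formula only
needs `λ i = |λ i|` and that each pair `i < j` contributes `|α i - α j|` twice to `∏ i, |f′(α i)|`.
-/

open Polynomial Finset

theorem Finset.prod_prod_erase_eq_prod_prod_lt_sq {ι M : Type*} [Fintype ι] [LinearOrder ι]
    [CommMonoid M] {h : ι → ι → M} (hsymm : ∀ i j, h i j = h j i) :
    ∏ i, ∏ j ∈ univ.erase i, h i j = ∏ i, ∏ j ∈ univ.filter (i < ·), h i j ^ 2 := by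
  have hsplit : ∀ i, ∏ j ∈ univ.erase i, h i j =
      (∏ j ∈ univ.filter (· < i), h i j) * ∏ j ∈ univ.filter (i < ·), h i j := by
    intro i
    rw [← prod_filter_mul_prod_filter_not (univ.erase i) (· < i)]
    congr 2 <;> ext j
    · simpa using ne_of_lt
    · simp only [mem_filter, mem_erase, mem_univ, and_true, true_and, not_lt]
      exact ⟨fun hj => hj.1.symm.lt_of_le hj.2, fun hj => ⟨hj.ne', hj.le⟩⟩
  have hswap : ∏ i, ∏ j ∈ univ.filter (· < i), h i j = ∏ i, ∏ j ∈ univ.filter (i < ·), h i j :=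
    (prod_comm' fun _ _ => by simp).trans
      (prod_congr rfl fun i _ => prod_congr rfl fun j _ => hsymm j i)
  rw [prod_congr rfl fun i _ => hsplit i, prod_mul_distrib, hswap, ← prod_mul_distrib]
  simp_rw [sq, prod_mul_distrib]

theorem Fin.prod_univ_erase_eq_prod_succAbove {M : Type*} [CommMonoid M] {n : ℕ}
    (f : Fin (n + 1) → M) (i : Fin (n + 1)) :
    ∏ j ∈ univ.erase i, f j = ∏ k, f (i.succAbove k) := by
  rw [← compl_singleton, ← Fin.image_succAbove_univ i,
    prod_image fun _ _ _ _ h => Fin.succAbove_right_injective h]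

def Interlaces {K : Type*} [LT K] {n : ℕ} (α : Fin (n + 1) → K) (β : Fin n → K) : Prop :=
  ∀ k, α k.castSucc < β k ∧ β k < α k.succ

namespace Interlaces

variable {K : Type*} [Field K] [LinearOrder K] [IsStrictOrderedRing K] {n : ℕ}
  {α : Fin (n + 1) → K} {β : Fin n → K}

theorem sub_div_sub_succAbove_pos (h : Interlaces α β) (hα : Monotone α) (i : Fin (n + 1))
    (k : Fin n) : 0 < (α i - β k) / (α i - α (i.succAbove k)) := by
  rcases lt_or_ge k.castSucc i with hki | hik
  · have hβ : β k < α i := (h k).2.trans_le (hα (Fin.castSucc_lt_iff_succ_le.mp hki))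
    rw [Fin.succAbove_of_castSucc_lt _ _ hki]
    exact div_pos (sub_pos.mpr hβ) (sub_pos.mpr ((h k).1.trans hβ))
  · have hβ : α i < β k := (hα hik).trans_lt (h k).1
    rw [Fin.succAbove_of_le_castSucc _ _ hik]
    exact div_pos_of_neg_of_neg (sub_neg.mpr hβ) (sub_neg.mpr (hβ.trans (h k).2))

theorem prod_sub_div_prod_erase_sub_pos (h : Interlaces α β) (hα : Monotone α)
    (i : Fin (n + 1)) : 0 < (∏ k, (α i - β k)) / ∏ j ∈ univ.erase i, (α i - α j) := by
  rw [Fin.prod_univ_erase_eq_prod_succAbove, ← prod_div_distrib]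
  exact prod_pos fun k _ => h.sub_div_sub_succAbove_pos hα i k

end Interlaces

/-- With `f` monic and split with the roots `α i`, `|Res(f, g)| = ∏ i, |g(α i)|` and
`|Disc(f)| = ∏_{i < j} (α i − α j)²`. -/
theorem statement6_general (n : ℕ) (f g : Polynomial ℤ)
    (α : Fin (n + 1) → ℝ) (β : Fin n → ℝ) (hsm : StrictMono α)
    (hf : f.map (Int.castRingHom ℝ) = ∏ i, (X - C (α i)))
    (hg : g.map (Int.castRingHom ℝ) = ∏ i, (X - C (β i)))
    (hint : ∀ i : Fin n, α i.castSucc < β i ∧ β i < α i.succ)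
    (lam : Fin (n + 1) → ℝ)
    (hlam : ∀ i, lam i = (Polynomial.aeval (α i) g) /
      ((Polynomial.derivative (f.map (Int.castRingHom ℝ))).eval (α i))) :
    (∀ i, 0 < lam i) ∧ (∑ i, lam i = 1) ∧
      ∏ i, lam i =
        (∏ i, |Polynomial.aeval (α i) g|) /
          (∏ i, ∏ j ∈ Finset.univ.filter (fun j => i < j), (α i - α j) ^ 2) := by
  set G := g.map (Int.castRingHom ℝ)
  have hGnodal : G = Lagrange.nodal univ β := hg
  have haeval : ∀ x : ℝ, aeval x g = G.eval x := fun x => (eval_map_algebraMap g x).symm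
  have hlam' : ∀ i, lam i = G.eval (α i) / ∏ j ∈ univ.erase i, (α i - α j) := fun i => by
    rw [hlam, haeval, hf, ← Lagrange.nodal_eq,
      Lagrange.eval_nodal_derivative_eval_node_eq (mem_univ i), Lagrange.eval_nodal]
  have hpos : ∀ i, 0 < lam i := fun i => by
    rw [hlam', hGnodal, Lagrange.eval_nodal]
    exact Interlaces.prod_sub_div_prod_erase_sub_pos hint hsm.monotone i
  refine ⟨hpos, ?_, ?_⟩
  · have hGmonic : G.Monic := hGnodal ▸ Lagrange.nodal_monic
    have hGdeg : G.natDegree = #(univ : Finset (Fin (n + 1))) - 1 := by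
      simp [hGnodal, Lagrange.natDegree_nodal]
    rw [← hGmonic.coeff_natDegree, hGdeg,
      Lagrange.coeff_eq_sum hsm.injective.injOn (by
        simp only [hGnodal, Lagrange.degree_nodal, card_univ, Fintype.card_fin]
        exact_mod_cast n.lt_succ_self)]
    exact sum_congr rfl fun i _ => hlam' i
  · rw [← prod_congr rfl fun i _ => abs_of_pos (hpos i)]
    simp_rw [hlam', abs_div, haeval, prod_div_distrib, abs_prod]
    rw [prod_prod_erase_eq_prod_prod_lt_sq fun i j => abs_sub_comm (α i) (α j)]
    simp_rw [sq_abs]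

/-- Let `f ∈ ℤ[X]` be monic irreducible of degree `n + 1 ≥ 2` with real roots
`α 0 < ⋯ < α n`, interlaced by the monic `g ∈ ℤ[X]` with roots `β 0, …, β (n-1)`.
Setting `λ i = g(α i) / f′(α i)`, each `λ i` is positive, `∑ λ i = 1`, and
`∏ λ i = |Res(f, g)| / |Disc(f)|`.  Here, `f` being monic with the real roots `α i`,
`|Res(f, g)| = ∏ i, |g(α i)|` and `|Disc(f)| = ∏_{i < j} (α i − α j)²`. -/
theorem statement6 (n : ℕ) (hn : 1 ≤ n) (f g : Polynomial ℤ)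
    (hm : f.Monic) (hirr : Irreducible f)
    (α : Fin (n + 1) → ℝ) (β : Fin n → ℝ) (hsm : StrictMono α)
    (hf : f.map (Int.castRingHom ℝ) = ∏ i, (X - C (α i)))
    (hg : g.map (Int.castRingHom ℝ) = ∏ i, (X - C (β i)))
    (hint : ∀ i : Fin n, α i.castSucc < β i ∧ β i < α i.succ)
    (lam : Fin (n + 1) → ℝ)
    (hlam : ∀ i, lam i = (Polynomial.aeval (α i) g) /
      ((Polynomial.derivative (f.map (Int.castRingHom ℝ))).eval (α i))) :
    (∀ i, 0 < lam i) ∧ (∑ i, lam i = 1) ∧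
      ∏ i, lam i =
        (∏ i, |Polynomial.aeval (α i) g|) /
          (∏ i, ∏ j ∈ Finset.univ.filter (fun j => i < j), (α i - α j) ^ 2) :=
  statement6_general n f g α β hsm hf hg hint lam hlam
end

section
/- Let f ∈ ℤ[X] be a monic separable polynomial of degree d ≥ 2 whose roots α_1, …, α_d are all real. Let 𝒞(f) ⊆ ℝ^d be the convex hull of the d points (α_i^{d−1}, α_i^{d−2}, …, α_i, 1) for i = 1, …, d, and let 𝒦(f) ⊆ ℝ^d be the convex hull of the d points (1, b_1^{(i)}, …, b_{d−1}^{(i)}) for i = 1, …, d, where ∏_{j ≠ i}(X − α_j) = X^{d−1} + ∑_{j=1}^{d−1} b_j^{(i)} X^{d−1−j}. Then the sets 𝒞(f) ∩ ℤ^d and 𝒦(f) ∩ ℤ^d are finite and have the same cardinality. -/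
/-!
Write `F = ∏ (X - α_i)` for `f` over `ℝ`. Comparing coefficients in `F = (X - a) g` gives
`g_n = ∑_b a^b F_{n+b+1}`, so the coefficient vector of `∏_{j ≠ i} (X - α_j)` is the image of
`(α_i^{d-1}, …, α_i, 1)` under one Hankel matrix `H` whose entries are coefficients of `f`.
As `f` is monic of degree `d`, `H` vanishes above its antidiagonal and is `1` on it, so `H` is
unimodular: it maps `𝒞(f)` onto `𝒦(f)` and restricts to a bijection of `ℤ^d`.
-/

open Polynomial Matrix

theorem Polynomial.coeff_eq_sum_add_of_eq_X_sub_C_mul {R : Type*} [CommRing R] {F g : R[X]}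
    {a : R} (h : F = (X - C a) * g) (n m : ℕ) :
    g.coeff n = ∑ b ∈ Finset.range m, a ^ b * F.coeff (n + b + 1) + a ^ m * g.coeff (n + m) := by
  have step : ∀ j, g.coeff j = F.coeff (j + 1) + a * g.coeff (j + 1) := fun j => by
    rw [h, sub_mul, coeff_sub, coeff_X_mul, coeff_C_mul]; ring
  induction m with
  | zero => simp
  | succ m ih => rw [ih, Finset.sum_range_succ, step (n + m), ← add_assoc]; ring

/-- Row `k` stands for the coefficient of `X ^ (d - 1 - k)` and column `l` for the power
`a ^ (d - 1 - l)`, the coordinates of the theorem. -/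
def quotientMatrix {R : Type*} [Semiring R] (F : R[X]) (d : ℕ) : Matrix (Fin d) (Fin d) R :=
  Matrix.of fun k l => F.coeff ((d - 1 - k) + (d - 1 - l) + 1)

theorem quotientMatrix_map {R S : Type*} [Semiring R] [Semiring S] (F : R[X]) (d : ℕ)
    (φ : R →+* S) : (quotientMatrix F d).map φ = quotientMatrix (F.map φ) d := by
  ext k l; simp [quotientMatrix, coeff_map]

theorem quotientMatrix_mulVec_pow {R : Type*} [CommRing R] {F g : R[X]} {a : R} {d : ℕ}
    (h : F = (X - C a) * g) (hg : g.natDegree < d) :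
    quotientMatrix F d *ᵥ (fun l : Fin d => a ^ (d - 1 - (l : ℕ))) =
      fun k : Fin d => g.coeff (d - 1 - (k : ℕ)) := by
  ext k
  rw [coeff_eq_sum_add_of_eq_X_sub_C_mul h _ d, coeff_eq_zero_of_natDegree_lt (by omega), mul_zero,
    add_zero, ← Fin.sum_univ_eq_sum_range (fun b => a ^ b * F.coeff (d - 1 - k + b + 1)),
    ← Equiv.sum_comp Fin.revPerm fun b : Fin d => a ^ (b : ℕ) * F.coeff (d - 1 - k + b + 1)]
  simp only [mulVec, dotProduct]
  refine Fintype.sum_congr _ _ fun l => ?_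
  have hl : (l.rev : ℕ) = d - 1 - l := by rw [Fin.val_rev]; omega
  rw [Fin.revPerm_apply, hl, mul_comm]
  rfl

theorem isUnit_det_quotientMatrix {R : Type*} [CommRing R] {F : R[X]} {d : ℕ} (hF : F.Monic)
    (hd : F.natDegree = d) : IsUnit (quotientMatrix F d).det := by
  have htri : ((quotientMatrix F d).submatrix Fin.revPerm id).IsUpperTriangular := by
    intro k l hlk
    simp only [quotientMatrix, submatrix_apply, of_apply, Fin.revPerm_apply, Fin.val_rev, id]
    exact coeff_eq_zero_of_natDegree_lt (by simp only [id_eq, Fin.lt_def] at hlk; omega)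
  have hdiag : ∀ k, (quotientMatrix F d).submatrix Fin.revPerm id k k = 1 := by
    intro k
    simp only [quotientMatrix, submatrix_apply, of_apply, Fin.revPerm_apply, Fin.val_rev, id]
    rw [← hF.coeff_natDegree, hd]; congr 1; omega
  have := det_of_isUpperTriangular htri
  rw [det_permute, Finset.prod_congr rfl fun k _ => hdiag k, Finset.prod_const_one] at this
  exact IsUnit.of_mul_eq_one_right _ this

def integerPoints (ι : Type*) : Set (ι → ℝ) := {v | ∀ k, ∃ n : ℤ, v k = n}

theorem integerPoints_eq_range (ι : Type*) :
    integerPoints ι = Set.range fun n : ι → ℤ => fun k => (n k : ℝ) := by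
  ext v
  simp only [integerPoints, Set.mem_ofPred_eq, Set.mem_range, funext_iff, eq_comm (a := v _)]
  exact ⟨fun h => ⟨fun k => (h k).choose, fun k => (h k).choose_spec⟩, fun ⟨n, hn⟩ k => ⟨n k, hn k⟩⟩

theorem Bornology.IsBounded.finite_inter_integerPoints {ι : Type*} [Fintype ι] {s : Set (ι → ℝ)}
    (hs : Bornology.IsBounded s) : (s ∩ integerPoints ι).Finite := by
  refine (ZSpan.setFinite_inter (Pi.basisFun ℝ ι) hs).subset (Set.inter_subset_inter_right _ ?_)
  intro v hv
  rw [SetLike.mem_coe, Module.Basis.mem_span_iff_repr_mem]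
  intro k
  obtain ⟨n, hn⟩ := hv k
  exact ⟨n, by simp [hn]⟩

section Unimodular

variable {ι : Type*} [Fintype ι] [DecidableEq ι] (A : Matrix ι ι ℤ)

theorem mulVec_map_intCast_injective (hA : IsUnit A.det) :
    Function.Injective (A.map (Int.castRingHom ℝ)).mulVec :=
  mulVec_injective_iff_isUnit.2 <| (isUnit_iff_isUnit_det _).2 <| by
    rw [← RingHom.mapMatrix_apply, ← RingHom.map_det]
    exact hA.map _

theorem image_mulVec_map_intCast_integerPoints (hA : IsUnit A.det) :
    (A.map (Int.castRingHom ℝ)).mulVec '' integerPoints ι = integerPoints ι := by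
  have hcast : ∀ n : ι → ℤ, (A.map (Int.castRingHom ℝ)) *ᵥ (fun k => (n k : ℝ)) =
      fun k => ((A *ᵥ n) k : ℝ) := fun n => by
    ext k; exact (RingHom.map_mulVec (Int.castRingHom ℝ) A n k).symm
  rw [integerPoints_eq_range]
  refine subset_antisymm ?_ ?_
  · rintro _ ⟨_, ⟨n, rfl⟩, rfl⟩
    exact ⟨_, (hcast n).symm⟩
  · rintro _ ⟨m, rfl⟩
    refine ⟨_, ⟨A⁻¹ *ᵥ m, rfl⟩, ?_⟩
    rw [hcast, mulVec_mulVec, mul_nonsing_inv A hA, one_mulVec]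

theorem finite_and_ncard_eq_of_unimodular (hA : IsUnit A.det) {κ : Type*} [Finite κ]
    (p q : κ → ι → ℝ) (hpq : ∀ i, q i = A.map (Int.castRingHom ℝ) *ᵥ p i) :
    (convexHull ℝ (Set.range p) ∩ integerPoints ι).Finite ∧
      (convexHull ℝ (Set.range q) ∩ integerPoints ι).Finite ∧
      (convexHull ℝ (Set.range p) ∩ integerPoints ι).ncard =
        (convexHull ℝ (Set.range q) ∩ integerPoints ι).ncard := by
  set M := (A.map (Int.castRingHom ℝ)).mulVecLin
  have hinj : Function.Injective M := mulVec_map_intCast_injective A hA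
  have himage : convexHull ℝ (Set.range q) ∩ integerPoints ι =
      M '' (convexHull ℝ (Set.range p) ∩ integerPoints ι) := by
    rw [Set.image_inter hinj, LinearMap.image_convexHull, ← Set.range_comp, coe_mulVecLin,
      image_mulVec_map_intCast_integerPoints A hA, funext hpq]
    rfl
  have hfinite :=
    ((Set.finite_range p).isCompact_convexHull (𝕜 := ℝ)).isBounded.finite_inter_integerPoints
  rw [himage]
  exact ⟨hfinite, hfinite.image M, (Set.ncard_image_of_injective _ hinj).symm⟩

end Unimodular

theorem statement8_general (d : ℕ) (f : Polynomial ℤ) (α : Fin d → ℝ)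
    (hf : f.map (Int.castRingHom ℝ) = ∏ i, (X - C (α i))) :
    letI Cf : Set (Fin d → ℝ) :=
      convexHull ℝ (Set.range fun i : Fin d => fun k : Fin d => α i ^ (d - 1 - (k : ℕ)))
    letI Kf : Set (Fin d → ℝ) :=
      convexHull ℝ (Set.range fun i : Fin d => fun k : Fin d =>
        (∏ j ∈ Finset.univ.erase i, (X - C (α j))).coeff (d - 1 - (k : ℕ)))
    letI Zd : Set (Fin d → ℝ) := {v | ∀ k, ∃ n : ℤ, v k = n}
    (Cf ∩ Zd).Finite ∧ (Kf ∩ Zd).Finite ∧ (Cf ∩ Zd).ncard = (Kf ∩ Zd).ncard := by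
  have hmonic : (f.map (Int.castRingHom ℝ)).Monic :=
    hf ▸ monic_prod_of_monic _ _ fun j _ => monic_X_sub_C _
  have hdeg : ∀ s : Finset (Fin d), (∏ j ∈ s, (X - C (α j))).natDegree = s.card := fun s => by
    rw [natDegree_prod_of_monic _ _ fun j _ => monic_X_sub_C _]; simp
  have hA : IsUnit (quotientMatrix f d).det :=
    isUnit_det_quotientMatrix (monic_of_injective (Int.castRingHom ℝ).injective_int hmonic) <| by
      rw [← natDegree_map_eq_of_injective (Int.castRingHom ℝ).injective_int, hf, hdeg,
        Finset.card_univ, Fintype.card_fin]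
  refine finite_and_ncard_eq_of_unimodular _ hA _ _ fun i => ?_
  rw [quotientMatrix_map, quotientMatrix_mulVec_pow]
  · rw [hf, Finset.mul_prod_erase _ (fun j => X - C (α j)) (Finset.mem_univ i)]
  · rw [hdeg, Finset.card_erase_of_mem (Finset.mem_univ i), Finset.card_univ, Fintype.card_fin]
    exact Nat.sub_one_lt_of_lt (Fin.pos i)

/-- Let `f ∈ ℤ[X]` be monic separable of degree `d ≥ 2` with (distinct) real roots
`α 1, …, α d`.  Let `𝒞(f) ⊆ ℝ^d` be the convex hull of the points
`(α_i^{d−1}, …, α_i, 1)` and `𝒦(f) ⊆ ℝ^d` the convex hull of the coefficient vectors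
`(1, b_1^{(i)}, …, b_{d−1}^{(i)})` of the polynomials `∏_{j ≠ i} (X − α_j)`.  Then
`𝒞(f) ∩ ℤ^d` and `𝒦(f) ∩ ℤ^d` are finite of the same cardinality. -/
theorem statement8 (d : ℕ) (hd : 2 ≤ d) (f : Polynomial ℤ) (α : Fin d → ℝ)
    (hα : Function.Injective α)
    (hf : f.map (Int.castRingHom ℝ) = ∏ i, (X - C (α i))) :
    letI Cf : Set (Fin d → ℝ) :=
      convexHull ℝ (Set.range fun i : Fin d => fun k : Fin d => α i ^ (d - 1 - (k : ℕ)))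
    letI Kf : Set (Fin d → ℝ) :=
      convexHull ℝ (Set.range fun i : Fin d => fun k : Fin d =>
        (∏ j ∈ Finset.univ.erase i, (X - C (α j))).coeff (d - 1 - (k : ℕ)))
    letI Zd : Set (Fin d → ℝ) := {v | ∀ k, ∃ n : ℤ, v k = n}
    (Cf ∩ Zd).Finite ∧ (Kf ∩ Zd).Finite ∧ (Cf ∩ Zd).ncard = (Kf ∩ Zd).ncard :=
  statement8_general d f α hf
end

section
/- Let K be a totally real number field of degree d satisfying Condition (A), with ring of integers R and codifferent R^∨. Assume there exists a totally positive element of R^∨ of trace 1. If Q is a classical universal quadratic form of rank r over R, then r·d ≥ #{γ ∈ R^∨ : γ totally positive, Tr_{K/ℚ}(γ) = 1}. -/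
/-!
Monogenicity gives `R^∨ = f'(θ)⁻¹ R`, and a unit with the signature of `f'(θ)` turns this into
`R^∨ = c R` with `c` totally positive. So the elements to be counted are the `c α` with `α ∈ R`
totally positive and `Tr(c α) = 1`. As `Q` is classical, `Q(v) = B(v, v)` for a symmetric
`R`-bilinear form `B`, and `b(v, w) = Tr(c B(v, w))` is a symmetric, integer-valued, positive
definite `ℤ`-bilinear form on `R^r`. Writing each `α = Q(v_α)`, the `v_α` are `b`-unit vectors.
For unit vectors `v, w` with `m = b(v, w)`, the vector `w - m v` has norm `1 - m²`, so either
`m = 0` or `w = ±v`; hence the `v_α` are orthonormal, so `ℤ`-linearly independent in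
`R^r ≅ ℤ^(rd)`.
-/

open NumberField

/-- An element of a field is totally positive if every real embedding sends it to a
positive real. -/
def IsTotallyPositive {K : Type*} [Field K] (x : K) : Prop :=
  ∀ σ : K →+* ℝ, 0 < σ x

/-- A field is totally real if every complex embedding has real image. -/
def IsTotallyRealField (K : Type*) [Field K] : Prop :=
  ∀ φ : K →+* ℂ, ∀ x : K, (φ x).im = 0

/-- The value of the quadratic form `∑_{i ≤ j} a i j * x i * x j` at the vector `v`. -/
def QFval {R : Type*} [CommRing R] {r : ℕ} (a : Fin r → Fin r → R) (v : Fin r → R) : R :=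
  ∑ i : Fin r, ∑ j : Fin r, if i ≤ j then a i j * v i * v j else 0

/-- A quadratic form (given by its upper-triangular coefficients `a` over the ring of
integers of `K`) is universal if it is totally positive definite and represents every
totally positive algebraic integer of `K`. -/
def IsUniversalQF {K : Type*} [Field K] {r : ℕ}
    (a : Fin r → Fin r → 𝓞 K) : Prop :=
  (∀ v : Fin r → 𝓞 K, v ≠ 0 →
    IsTotallyPositive (algebraMap (𝓞 K) K (QFval a v))) ∧
  (∀ α : 𝓞 K, IsTotallyPositive (algebraMap (𝓞 K) K α) →
    ∃ v : Fin r → 𝓞 K, QFval a v = α)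

/-- Condition (A): the field is monogenic and its ring of integers has units of every
signature. -/
def ConditionA (K : Type*) [Field K] : Prop :=
  (∃ θ : 𝓞 K, Algebra.adjoin ℤ ({θ} : Set (𝓞 K)) = ⊤) ∧
  (∀ ε : (K →+* ℝ) → Bool, ∃ u : (𝓞 K)ˣ,
    ∀ σ : K →+* ℝ, (0 < σ (algebraMap (𝓞 K) K u) ↔ ε σ = true))

/-- An element of `K` lies in the codifferent of the ring of integers `R` of `K` iff
`Tr_{K/ℚ}(γ x) ∈ ℤ` for every `x ∈ R`. -/
def InCodifferent {K : Type*} [Field K] [Algebra ℚ K] (γ : K) : Prop :=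
  ∀ x : 𝓞 K, ∃ n : ℤ, Algebra.trace ℚ K (γ * algebraMap (𝓞 K) K x) = n

open Polynomial

section TotallyPositive

variable {K : Type*} [Field K]

theorem IsTotallyPositive.mul {x y : K} (hx : IsTotallyPositive x) (hy : IsTotallyPositive y) :
    IsTotallyPositive (x * y) :=
  fun σ ↦ by simpa using mul_pos (hx σ) (hy σ)

theorem IsTotallyPositive.of_mul_left {x y : K} (hx : IsTotallyPositive x)
    (hxy : IsTotallyPositive (x * y)) : IsTotallyPositive y :=
  fun σ ↦ pos_of_mul_pos_right (by simpa using hxy σ) (hx σ).le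

theorem IsTotallyRealField.isReal (htr : IsTotallyRealField K) (φ : K →+* ℂ) :
    ComplexEmbedding.IsReal φ :=
  ComplexEmbedding.isReal_iff.mpr <| RingHom.ext fun x ↦
    Complex.ext (by simp) (by simp [htr φ x])

theorem IsTotallyPositive.trace_pos [NumberField K] (htr : IsTotallyRealField K) {x : K}
    (hx : IsTotallyPositive x) : 0 < Algebra.trace ℚ K x := by
  have htrace : (Algebra.trace ℚ K x : ℝ) =
      ∑ φ : K →ₐ[ℚ] ℂ, (htr.isReal φ.toRingHom).embedding x := by
    apply Complex.ofReal_injective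
    have := trace_eq_sum_embeddings ℂ (K := ℚ) (x := x)
    push_cast
    simp only [ComplexEmbedding.IsReal.coe_embedding_apply]
    exact_mod_cast this
  have : (0 : ℝ) < Algebra.trace ℚ K x :=
    htrace ▸ Finset.sum_pos (fun φ _ ↦ hx _) ⟨IsAlgClosed.lift, Finset.mem_univ _⟩
  exact_mod_cast this

end TotallyPositive

section Codifferent

variable {K : Type*} [Field K] [NumberField K]

theorem adjoin_rat_eq_top_of_adjoin_int_eq_top {θ : 𝓞 K}
    (hθ : Algebra.adjoin ℤ {θ} = ⊤) : Algebra.adjoin ℚ {(θ : K)} = ⊤ := by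
  rw [← IntermediateField.adjoin_simple_toSubalgebra_of_isAlgebraic
    (Algebra.IsAlgebraic.isAlgebraic _), eq_top_iff]
  have hR : ∀ y : 𝓞 K, (y : K) ∈ IntermediateField.adjoin ℚ {(θ : K)} := by
    intro y
    have hy : y ∈ Algebra.adjoin ℤ {θ} := hθ ▸ Algebra.mem_top
    induction hy using Algebra.adjoin_induction with
    | mem y hy =>
      rw [Set.mem_singleton_iff.mp hy]
      exact IntermediateField.mem_adjoin_simple_self ℚ _
    | algebraMap n => simp
    | add y z _ _ hy hz => simpa using add_mem hy hz
    | mul y z _ _ hy hz => simpa using mul_mem hy hz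
  intro x _
  change x ∈ IntermediateField.adjoin ℚ {(θ : K)}
  obtain ⟨y, z, _, rfl⟩ := IsFractionRing.div_surjective (A := 𝓞 K) x
  exact div_mem (hR y) (hR z)

omit [NumberField K] in
theorem mem_adjoin_int_iff_of_adjoin_eq_top {θ : 𝓞 K} (hθ : Algebra.adjoin ℤ {θ} = ⊤)
    (x : K) : x ∈ Algebra.adjoin ℤ {(θ : K)} ↔ ∃ β : 𝓞 K, (β : K) = x := by
  have := AlgHom.map_adjoin_singleton (IsScalarTower.toAlgHom ℤ (𝓞 K) K) θ
  rw [IsScalarTower.coe_toAlgHom', hθ, Algebra.map_top] at this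
  rw [← this]
  rfl

theorem inCodifferent_iff_of_adjoin_eq_top {θ : 𝓞 K} (hθ : Algebra.adjoin ℤ {θ} = ⊤)
    (γ : K) : InCodifferent γ ↔
      ∃ β : 𝓞 K, γ = (aeval (θ : K) (derivative (minpoly ℚ (θ : K))))⁻¹ * β := by
  have hdual := traceForm_dualSubmodule_adjoin ℤ ℚ (adjoin_rat_eq_top_of_adjoin_int_eq_top hθ)
    (RingOfIntegers.isIntegral_coe θ)
  have hmem := mem_adjoin_int_iff_of_adjoin_eq_top hθ
  calc InCodifferent γ ↔ γ ∈ (Algebra.traceForm ℚ K).dualSubmodule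
        (Subalgebra.toSubmodule (Algebra.adjoin ℤ {(θ : K)})) := by
        simp only [LinearMap.BilinForm.mem_dualSubmodule, Subalgebra.mem_toSubmodule, hmem,
          Algebra.traceForm_apply, Submodule.mem_one, forall_exists_index,
          forall_apply_eq_imp_iff, InCodifferent]
        simp [eq_comm]
    _ ↔ _ := by
        rw [hdual, Submodule.mem_smul_pointwise_iff_exists]
        simp [hmem, eq_comm]

end Codifferent

section ConditionA

variable {K : Type*} [Field K] [NumberField K]

omit [NumberField K] in
theorem exists_unit_isTotallyPositive_mul
    (hsig : ∀ ε : (K →+* ℝ) → Bool, ∃ u : (𝓞 K)ˣ,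
      ∀ σ : K →+* ℝ, (0 < σ (algebraMap (𝓞 K) K u) ↔ ε σ = true))
    {x : K} (hx : x ≠ 0) : ∃ u : (𝓞 K)ˣ, IsTotallyPositive (x * (u : 𝓞 K)) := by
  obtain ⟨u, hu⟩ := hsig fun σ ↦ decide (0 < σ x)
  refine ⟨u, fun σ ↦ ?_⟩
  have hσx : σ x ≠ 0 := (map_ne_zero σ).mpr hx
  have hσu : σ (u : 𝓞 K) ≠ 0 := (map_ne_zero σ).mpr (by simp)
  have hsign : 0 < σ (u : 𝓞 K) ↔ 0 < σ x := by simpa using hu σ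
  rw [map_mul]
  rcases hσx.lt_or_gt with hneg | hpos
  · exact mul_pos_of_neg_of_neg hneg
      (hσu.lt_or_gt.resolve_right fun h ↦ hneg.not_gt (hsign.mp h))
  · exact mul_pos hpos (hsign.mpr hpos)

theorem ConditionA.exists_isTotallyPositive_codifferent_generator (hA : ConditionA K) :
    ∃ c : K, IsTotallyPositive c ∧ ∀ γ : K, InCodifferent γ ↔ ∃ β : 𝓞 K, γ = c * β := by
  obtain ⟨⟨θ, hθ⟩, hsig⟩ := hA
  set δ := aeval (θ : K) (derivative (minpoly ℚ (θ : K)))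
  have hδ : δ ≠ 0 := (Algebra.IsSeparable.isSeparable ℚ (θ : K)).aeval_derivative_ne_zero
    (minpoly.aeval _ _)
  obtain ⟨u, hu⟩ := exists_unit_isTotallyPositive_mul hsig (inv_ne_zero hδ)
  refine ⟨δ⁻¹ * (u : 𝓞 K), hu, fun γ ↦ ?_⟩
  rw [inCodifferent_iff_of_adjoin_eq_top hθ]
  constructor
  · rintro ⟨β, rfl⟩
    refine ⟨(u⁻¹ : (𝓞 K)ˣ) * β, ?_⟩
    simp [δ, mul_assoc]
  · rintro ⟨β, rfl⟩
    exact ⟨u * β, by simp [δ, mul_assoc]⟩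

end ConditionA

section ClassicalForm

variable {R : Type*} [CommRing R] {r : ℕ}

theorem exists_isSymm_qfval_eq_toLinearMap₂' (a : Fin r → Fin r → R)
    (ha : ∀ i j : Fin r, i < j → ∃ b : R, a i j = 2 * b) :
    ∃ G : Matrix (Fin r) (Fin r) R, G.IsSymm ∧
      ∀ v, QFval a v = Matrix.toLinearMap₂' R G v v := by
  choose! b hb using ha
  let G : Matrix (Fin r) (Fin r) R :=
    Matrix.of fun i j ↦ if i < j then b i j else if j < i then b j i else a i i
  refine ⟨G, ?_, fun v ↦ ?_⟩
  · refine Matrix.IsSymm.ext fun i j ↦ ?_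
    rcases lt_trichotomy i j with h | rfl | h
    · simp [G, h, h.not_gt]
    · rfl
    · simp [G, h, h.not_gt]
  let P : Fin r → Fin r → R := fun i j ↦ if i < j then b i j * v i * v j else 0
  let D : Fin r → Fin r → R := fun i j ↦ if i = j then a i i * v i * v j else 0
  have hGterm : ∀ i j, v i • v j • G i j = P i j + P j i + D i j := by
    intro i j
    rcases lt_trichotomy i j with h | rfl | h
    · simp only [G, P, D, Matrix.of_apply, smul_eq_mul, h, h.not_gt, h.ne, ↓reduceIte, add_zero]
      ring
    · simp only [G, P, D, Matrix.of_apply, smul_eq_mul, lt_self_iff_false, ↓reduceIte, add_zero,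
        zero_add]
      ring
    · simp only [G, P, D, Matrix.of_apply, smul_eq_mul, h, h.not_gt, h.ne', ↓reduceIte, add_zero,
        zero_add]
      ring
  have hQterm : ∀ i j, (if i ≤ j then a i j * v i * v j else 0) = 2 * P i j + D i j := by
    intro i j
    rcases lt_trichotomy i j with h | rfl | h
    · simp only [P, D, h, h.le, h.ne, hb i j h, ↓reduceIte, add_zero]
      ring
    · simp [P, D]
    · simp [P, D, h.not_ge, h.not_gt, h.ne']
  simp only [QFval, Matrix.toLinearMap₂'_apply, hGterm, hQterm, Finset.sum_add_distrib,
    ← Finset.mul_sum]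
  rw [Finset.sum_comm (f := fun i j ↦ P j i)]
  ring

theorem Matrix.IsSymm.toLinearMap₂'_apply_comm {n : Type*} [Fintype n] [DecidableEq n]
    {G : Matrix n n R} (hG : G.IsSymm) (v w : n → R) :
    Matrix.toLinearMap₂' R G v w = Matrix.toLinearMap₂' R G w v := by
  rw [Matrix.toLinearMap₂'_apply', Matrix.toLinearMap₂'_apply', Matrix.dotProduct_mulVec,
    ← Matrix.mulVec_transpose, hG.eq, dotProduct_comm]

end ClassicalForm

section IntegralForm

variable {M : Type*} [AddCommGroup M] (b : M →ₗ[ℤ] M →ₗ[ℤ] ℚ)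
  (hsymm : ∀ v w, b v w = b w v) (hint : ∀ v w, ∃ n : ℤ, b v w = n)
  (hpos : ∀ v ≠ 0, 0 < b v v)
include hsymm hint hpos

theorem eq_or_eq_neg_or_apply_eq_zero_of_apply_self_eq_one {v w : M}
    (hv : b v v = 1) (hw : b w w = 1) : w = v ∨ w = -v ∨ b v w = 0 := by
  obtain ⟨m, hm⟩ := hint v w
  by_cases h : w - m • v = 0
  · have hwv : w = m • v := sub_eq_zero.mp h
    have hm2 : (m : ℚ) ^ 2 = 1 := by
      simpa [hwv, hv, sq] using hw
    rcases sq_eq_one_iff.mp (by exact_mod_cast hm2 : m ^ 2 = 1) with rfl | rfl <;> simp [hwv]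
  · have hnorm : b (w - m • v) (w - m • v) = 1 - m ^ 2 := by
      simp only [map_sub, map_zsmul, LinearMap.sub_apply, LinearMap.smul_apply, hv, hw, hm,
        hsymm w v, zsmul_eq_mul]
      ring
    have hm0 : m = 0 := by
      have := hpos _ h
      rw [hnorm] at this
      have : m ^ 2 < 1 := by exact_mod_cast (by linarith : (m : ℚ) ^ 2 < 1)
      nlinarith
    simp [hm, hm0]

theorem linearIndependent_of_apply_self_eq_one {ι : Type*} {v : ι → M}
    (hv : ∀ i, b (v i) (v i) = 1) (hne : ∀ i j, v j = v i ∨ v j = -v i → i = j) :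
    LinearIndependent ℤ v := by
  have horth : ∀ i j, i ≠ j → b (v i) (v j) = 0 := fun i j hij ↦
    ((eq_or_eq_neg_or_apply_eq_zero_of_apply_self_eq_one b hsymm hint hpos (hv i)
      (hv j)).resolve_left fun h ↦ hij (hne i j (.inl h))).resolve_left
      fun h ↦ hij (hne i j (.inr h))
  rw [linearIndependent_iff']
  intro s g hsum i hi
  have := congrArg (b (v i)) hsum
  rw [map_sum, Finset.sum_eq_single_of_mem i hi fun j _ hji ↦ by simp [horth i j hji.symm]]
    at this
  simpa [hv] using this

end IntegralForm

section TraceForm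

variable {K : Type*} [Field K] [NumberField K] {n : Type*} [Fintype n] [DecidableEq n]

noncomputable def traceBilin (c : K) (G : Matrix n n (𝓞 K)) :
    (n → 𝓞 K) →ₗ[ℤ] (n → 𝓞 K) →ₗ[ℤ] ℚ :=
  ((Matrix.toLinearMap₂' (𝓞 K) G).restrictScalars₁₂ ℤ ℤ).compr₂
    ((Algebra.trace ℚ K).restrictScalars ℤ ∘ₗ LinearMap.mulLeft ℤ c ∘ₗ
      (Algebra.linearMap (𝓞 K) K).restrictScalars ℤ)

theorem traceBilin_apply (c : K) (G : Matrix n n (𝓞 K)) (v w : n → 𝓞 K) :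
    traceBilin c G v w = Algebra.trace ℚ K (c * Matrix.toLinearMap₂' (𝓞 K) G v w) :=
  rfl

theorem traceBilin_comm {c : K} {G : Matrix n n (𝓞 K)} (hG : G.IsSymm) (v w : n → 𝓞 K) :
    traceBilin c G v w = traceBilin c G w v := by
  rw [traceBilin_apply, traceBilin_apply, hG.toLinearMap₂'_apply_comm]

theorem traceBilin_self_pos (htr : IsTotallyRealField K) {c : K} (hc : IsTotallyPositive c)
    {G : Matrix n n (𝓞 K)} {v : n → 𝓞 K}
    (hv : IsTotallyPositive (Matrix.toLinearMap₂' (𝓞 K) G v v : K)) :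
    0 < traceBilin c G v v :=
  (hc.mul hv).trace_pos htr

end TraceForm

theorem LinearIndependent.ncard_le_finrank {R M α : Type*} [Ring R] [StrongRankCondition R]
    [AddCommGroup M] [Module R M] [Module.Finite R M] {s : Set α} {v : s → M}
    (hv : LinearIndependent R v) : s.ncard ≤ Module.finrank R M := by
  have := hv.finite
  have := Fintype.ofFinite s
  rw [← Nat.card_coe_set_eq, Nat.card_eq_fintype_card]
  exact hv.fintype_card_le_finrank

theorem statement18_general (K : Type) [Field K] [NumberField K]
    (htr : IsTotallyRealField K) (d : ℕ) (hd : Module.finrank ℚ K = d)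
    (hA : ConditionA K)
    (r : ℕ) (a : Fin r → Fin r → 𝓞 K)
    (hclassical : ∀ i j : Fin r, i < j → ∃ b : 𝓞 K, a i j = 2 * b)
    (huniv : IsUniversalQF a) :
    {γ : K | IsTotallyPositive γ ∧ InCodifferent γ ∧
      Algebra.trace ℚ K γ = 1}.Finite ∧
    {γ : K | IsTotallyPositive γ ∧ InCodifferent γ ∧
      Algebra.trace ℚ K γ = 1}.ncard ≤ r * d := by
  obtain ⟨c, hc, hcod⟩ := hA.exists_isTotallyPositive_codifferent_generator
  obtain ⟨G, hGsymm, hQ⟩ := exists_isSymm_qfval_eq_toLinearMap₂' a hclassical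
  set S := {γ : K | IsTotallyPositive γ ∧ InCodifferent γ ∧ Algebra.trace ℚ K γ = 1}
  have hrep : ∀ γ : S, ∃ v : Fin r → 𝓞 K, (γ : K) = c * QFval a v := by
    rintro ⟨γ, hγpos, hγcod, -⟩
    obtain ⟨β, rfl⟩ := (hcod γ).mp hγcod
    obtain ⟨v, hv⟩ := huniv.2 β (hc.of_mul_left hγpos)
    exact ⟨v, by rw [hv]⟩
  choose v hv using hrep
  have hcodc : InCodifferent c := (hcod c).mpr ⟨1, by simp⟩
  have hli : LinearIndependent ℤ v := by
    refine linearIndependent_of_apply_self_eq_one (traceBilin c G) (traceBilin_comm hGsymm)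
      (fun _ _ ↦ hcodc _) (fun x hx ↦ traceBilin_self_pos htr hc (hQ x ▸ huniv.1 x hx))
      (fun γ ↦ ?_) (fun γ δ h ↦ ?_)
    · rw [traceBilin_apply, ← hQ, ← hv]
      exact γ.2.2.2
    · have hQvv : QFval a (v δ) = QFval a (v γ) := by
        rcases h with h | h <;> simp [hQ, h]
      exact Subtype.ext (by rw [hv γ, hv δ, hQvv])
  have := hli.finite
  refine ⟨Set.toFinite S, hd ▸ ?_⟩
  simpa [Module.finrank_pi_fintype, RingOfIntegers.rank] using hli.ncard_le_finrank

/-- Let `K` be a totally real number field of degree `d` satisfying Condition (A), whose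
codifferent contains a totally positive element of trace `1`.  If there is a classical
universal quadratic form of rank `r` over the ring of integers of `K`, then `r·d` is at
least the number of totally positive elements of the codifferent of trace `1`. -/
theorem statement18 (K : Type) [Field K] [NumberField K]
    (htr : IsTotallyRealField K) (d : ℕ) (hd : Module.finrank ℚ K = d)
    (hA : ConditionA K)
    (hex : ∃ γ : K, IsTotallyPositive γ ∧ InCodifferent γ ∧ Algebra.trace ℚ K γ = 1)
    (r : ℕ) (a : Fin r → Fin r → 𝓞 K)
    (hclassical : ∀ i j : Fin r, i < j → ∃ b : 𝓞 K, a i j = 2 * b)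
    (huniv : IsUniversalQF a) :
    {γ : K | IsTotallyPositive γ ∧ InCodifferent γ ∧
      Algebra.trace ℚ K γ = 1}.Finite ∧
    {γ : K | IsTotallyPositive γ ∧ InCodifferent γ ∧
      Algebra.trace ℚ K γ = 1}.ncard ≤ r * d :=
  statement18_general K htr d hd hA r a hclassical huniv
end
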